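/- Let A be a real n×d matrix, 0 < ε < 1, and let S be a real m×n matrix such that (1 − ε)‖Ax‖₂ ≤ ‖SAx‖₂ ≤ (1 + ε)‖Ax‖₂ for all x ∈ ℝ^d. Let V be a real d×k matrix with orthonormal columns such that SA·VVᵀ is a best rank-k approximation of SA in Frobenius norm, i.e., ‖SA − SA·VVᵀ‖_F ≤ ‖SA − Z‖_F for every m×d matrix Z of rank at most k (this holds when VVᵀ is the projection onto the span of the top k right singular vectors of SA). Then for every n×d matrix Z of rank at most k, ‖A − A·VVᵀ‖_F ≤ ((1 + ε)/(1 − ε))·‖A − Z‖_F. -/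

import Mathlib

/-!
Let `P = AB` be the orthogonal projection onto the column space of `A`, with `B` a generalized
inverse of `A`. The embedding bounds for `S` apply column by column to any product `A C`, hence
hold in Frobenius norm. For a competitor `Z`, the matrix `S P Z` has rank at most `k`, so
optimality of `V` for `SA` gives
`‖A(I - VVᵀ)‖ ≤ (1 - ε)⁻¹ ‖SA(I - VVᵀ)‖ ≤ (1 - ε)⁻¹ ‖S(A - PZ)‖ ≤ (1 + ε)/(1 - ε) ‖A - PZ‖`,
the last step because the columns of `A - PZ` lie in the column space of `A`. Finally
`A - PZ = P(A - Z)` and `P` is a contraction.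
-/

open Matrix

/-- The Euclidean norm of a vector in `ℝ^n`. -/
noncomputable def euclNorm {n : ℕ} (x : Fin n → ℝ) : ℝ := Real.sqrt (∑ i, (x i) ^ 2)

/-- The Frobenius norm of a real matrix. -/
noncomputable def frobNorm {m n : ℕ} (M : Matrix (Fin m) (Fin n) ℝ) : ℝ :=
  Real.sqrt (∑ i, ∑ j, (M i j) ^ 2)

open WithLp

lemma euclNorm_eq_norm_toLp {n : ℕ} (x : Fin n → ℝ) : euclNorm x = ‖toLp 2 x‖ := by
  simp [euclNorm, EuclideanSpace.norm_eq]

lemma frobNorm_eq_sqrt_sum_euclNorm_sq {a b : ℕ} (M : Matrix (Fin a) (Fin b) ℝ) :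
    frobNorm M = √(∑ j, euclNorm (Mᵀ j) ^ 2) := by
  simp only [frobNorm, euclNorm, transpose_apply]
  rw [Finset.sum_comm]
  congr 1
  exact Finset.sum_congr rfl fun j _ => (Real.sq_sqrt (by positivity)).symm

lemma frobNorm_mul_le_of_euclNorm_mulVec_le {a a' b e : ℕ} {M : Matrix (Fin a) (Fin b) ℝ}
    {N : Matrix (Fin a') (Fin b) ℝ} {c : ℝ} (hc : 0 ≤ c)
    (h : ∀ x, euclNorm (M *ᵥ x) ≤ c * euclNorm (N *ᵥ x)) (C : Matrix (Fin b) (Fin e) ℝ) :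
    frobNorm (M * C) ≤ c * frobNorm (N * C) := by
  have hcol : ∀ {a : ℕ} (M : Matrix (Fin a) (Fin b) ℝ) (j : Fin e), (M * C)ᵀ j = M *ᵥ Cᵀ j := by
    intro a M j; ext i; simp [mul_apply, mulVec, dotProduct]
  rw [frobNorm_eq_sqrt_sum_euclNorm_sq, frobNorm_eq_sqrt_sum_euclNorm_sq,
    ← Real.sqrt_sq hc, ← Real.sqrt_mul (sq_nonneg c), Finset.mul_sum]
  gcongr with j
  rw [hcol, hcol, ← mul_pow]
  exact pow_le_pow_left₀ (Real.sqrt_nonneg _) (h _) 2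

theorem Matrix.exists_mul_mul_eq_self_and_norm_mulVec_le {𝕜 : Type*} [RCLike 𝕜] {m n : Type*}
    [Fintype m] [DecidableEq m] [Fintype n] [DecidableEq n] (A : Matrix m n 𝕜) :
    ∃ B : Matrix n m 𝕜, A * B * A = A ∧
      ∀ v : m → 𝕜, ‖toLp 2 ((A * B) *ᵥ v)‖ ≤ ‖toLp 2 v‖ := by
  set f := toLpLin 2 2 A
  obtain ⟨g, hg⟩ := Module.projective_lifting_property f.rangeRestrict
    (LinearMap.range f).orthogonalProjectionOnto.toLinearMap f.surjective_rangeRestrict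
  have hAB : toLpLin 2 2 (A * (toLpLin 2 2).symm g) =
      (LinearMap.range f).starProjection.toLinearMap := by
    rw [toLpLin_mul_same, LinearEquiv.apply_symm_apply]
    change (LinearMap.range f).subtype ∘ₗ (f.rangeRestrict ∘ₗ g) = _
    rw [hg]
    rfl
  refine ⟨(toLpLin 2 2).symm g, (toLpLin 2 2).injective ?_, fun v => ?_⟩
  · ext1 x
    rw [toLpLin_mul_same, hAB]
    exact Submodule.starProjection_eq_self_iff.mpr (LinearMap.mem_range_self f x)
  · rw [← toLpLin_apply, hAB]
    exact Submodule.norm_starProjection_apply_le _ _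

theorem stmt11_general {n d m k : ℕ} (A : Matrix (Fin n) (Fin d) ℝ)
    (ε : ℝ) (hε0 : 0 < ε) (hε1 : ε < 1)
    (S : Matrix (Fin m) (Fin n) ℝ)
    (hS : ∀ x : Fin d → ℝ,
      (1 - ε) * euclNorm (A.mulVec x) ≤ euclNorm ((S * A).mulVec x) ∧
      euclNorm ((S * A).mulVec x) ≤ (1 + ε) * euclNorm (A.mulVec x))
    (V : Matrix (Fin d) (Fin k) ℝ)
    (hVopt : ∀ Z : Matrix (Fin m) (Fin d) ℝ, Z.rank ≤ k →
      frobNorm (S * A - S * A * (V * Vᵀ)) ≤ frobNorm (S * A - Z)) :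
    ∀ Z : Matrix (Fin n) (Fin d) ℝ, Z.rank ≤ k →
      frobNorm (A - A * (V * Vᵀ)) ≤ ((1 + ε) / (1 - ε)) * frobNorm (A - Z) := by
  intro Z hZ
  obtain ⟨B, hABA, hAB⟩ := A.exists_mul_mul_eq_self_and_norm_mulVec_le
  have hε : 0 < 1 - ε := by linarith
  have hlower : frobNorm (A * (1 - V * Vᵀ)) ≤ (1 - ε)⁻¹ * frobNorm (S * A * (1 - V * Vᵀ)) :=
    frobNorm_mul_le_of_euclNorm_mulVec_le (by positivity)
      (fun x => by rw [← div_eq_inv_mul, le_div_iff₀' hε]; exact (hS x).1) _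
  have hopt : frobNorm (S * A * (1 - V * Vᵀ)) ≤ frobNorm (S * A - S * (A * B * Z)) := by
    rw [Matrix.mul_sub, Matrix.mul_one]
    exact hVopt _ ((rank_mul_le_right _ _).trans ((rank_mul_le_right _ _).trans hZ))
  have hresidual : A * (B * (A - Z)) = A - A * B * Z := by
    rw [← Matrix.mul_assoc, Matrix.mul_sub, hABA]
  have hupper : frobNorm (S * A - S * (A * B * Z)) ≤ (1 + ε) * frobNorm (A - A * B * Z) := by
    have := frobNorm_mul_le_of_euclNorm_mulVec_le (by linarith) (fun x => (hS x).2) (B * (A - Z))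
    rwa [Matrix.mul_assoc, hresidual, Matrix.mul_sub] at this
  have hproj : frobNorm (A - A * B * Z) ≤ frobNorm (A - Z) := by
    have := frobNorm_mul_le_of_euclNorm_mulVec_le zero_le_one (M := A * B) (N := 1)
      (fun x => by
        rw [one_mulVec, one_mul, euclNorm_eq_norm_toLp, euclNorm_eq_norm_toLp]
        exact hAB x) (A - Z)
    rwa [Matrix.one_mul, one_mul, Matrix.mul_sub, hABA] at this
  calc frobNorm (A - A * (V * Vᵀ)) = frobNorm (A * (1 - V * Vᵀ)) := by
        rw [Matrix.mul_sub, Matrix.mul_one]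
    _ ≤ (1 - ε)⁻¹ * ((1 + ε) * frobNorm (A - Z)) := by
        refine hlower.trans (mul_le_mul_of_nonneg_left ?_ (by positivity))
        exact hopt.trans (hupper.trans (mul_le_mul_of_nonneg_left hproj (by linarith)))
    _ = ((1 + ε) / (1 - ε)) * frobNorm (A - Z) := by ring

/-- if `S` is an ℓ₂-subspace embedding for `A` and `V Vᵀ` projects onto
the span of the top `k` right singular vectors of `SA` (i.e., `SA·VVᵀ` is a best
rank-`k` approximation to `SA`), then `A·VVᵀ` is a `(1+ε)/(1−ε)`-approximate best
rank-`k` approximation to `A` in Frobenius norm. -/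
theorem stmt11 {n d m k : ℕ} (A : Matrix (Fin n) (Fin d) ℝ)
    (ε : ℝ) (hε0 : 0 < ε) (hε1 : ε < 1)
    (S : Matrix (Fin m) (Fin n) ℝ)
    (hS : ∀ x : Fin d → ℝ,
      (1 - ε) * euclNorm (A.mulVec x) ≤ euclNorm ((S * A).mulVec x) ∧
      euclNorm ((S * A).mulVec x) ≤ (1 + ε) * euclNorm (A.mulVec x))
    (V : Matrix (Fin d) (Fin k) ℝ) (hV : Vᵀ * V = 1)
    (hVopt : ∀ Z : Matrix (Fin m) (Fin d) ℝ, Z.rank ≤ k →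
      frobNorm (S * A - S * A * (V * Vᵀ)) ≤ frobNorm (S * A - Z)) :
    ∀ Z : Matrix (Fin n) (Fin d) ℝ, Z.rank ≤ k →
      frobNorm (A - A * (V * Vᵀ)) ≤ ((1 + ε) / (1 - ε)) * frobNorm (A - Z) :=
  stmt11_general A ε hε0 hε1 S hS V hVopt
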